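/- arXiv:2003.12836 — 3 statements merged into one kernel-verified Lean document; each statement's English description precedes it below -/
import Mathlib

section
/- Let f : ℝ → ℝ be convex and Lipschitz with constant D₁. Define the Gaussian smoothing f_μ(x) = E[f(x + μξ)] where ξ ∼ N(0,1) and μ > 0. Then f(x) ≤ f_μ(x) ≤ f(x) + μ·D₁ for all x ∈ ℝ. -/
/-!
Jensen's inequality at the mean `x` of `x + μξ` gives `f x ≤ E f(x + μξ)`. Conversely the
Lipschitz bound `f (x + μξ) ≤ f x + D₁ μ |ξ|` together with `E|ξ| ≤ √(E ξ²) = 1` (Jensen for the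
concave square root) gives the upper bound.
-/

open MeasureTheory ProbabilityTheory Set

open scoped NNReal

section

variable {α E F : Type*} [MeasurableSpace α] {ν : Measure α}
  [NormedAddCommGroup E] [NormedAddCommGroup F]

theorem LipschitzWith.integrable_comp [IsFiniteMeasure ν] {K : ℝ≥0} {f : E → F}
    (hf : LipschitzWith K f) {X : α → E} (hX : Integrable X ν) : Integrable (f ∘ X) ν := by
  refine ((integrable_const ‖f 0‖).add (hX.norm.const_mul K)).mono'
    (hf.continuous.comp_aestronglyMeasurable hX.1) (ae_of_all _ fun a => ?_)
  have := hf.norm_sub_le (X a) 0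
  rw [sub_zero] at this
  calc ‖f (X a)‖ ≤ ‖f 0‖ + ‖f (X a) - f 0‖ := norm_le_norm_add_norm_sub' _ _
    _ ≤ _ := by simpa using this

end

section

variable {E : Type*} [NormedAddCommGroup E] [NormedSpace ℝ E] [MeasurableSpace E]
  {ν : Measure E} [IsProbabilityMeasure ν] {K : ℝ≥0} {f : E → ℝ}

theorem LipschitzWith.integrable_comp_add_smul (hf : LipschitzWith K f)
    (hν : Integrable (fun t => t) ν) (x : E) (s : ℝ) :
    Integrable (fun t => f (x + s • t)) ν :=
  hf.integrable_comp ((integrable_const x).add (hν.smul s))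

theorem ConvexOn.le_integral_comp_add_smul [CompleteSpace E] (hconv : ConvexOn ℝ univ f)
    (hf : LipschitzWith K f) (hν : Integrable (fun t => t) ν) (hmean : ∫ t, t ∂ν = 0)
    (x : E) (s : ℝ) : f x ≤ ∫ t, f (x + s • t) ∂ν := by
  have hsmul : Integrable (fun t => s • t) ν := hν.smul s
  have hmeanX : ∫ t, (x + s • t) ∂ν = x := by
    rw [integral_add (integrable_const x) hsmul, integral_const, integral_smul, hmean]
    simp
  calc f x = f (∫ t, (x + s • t) ∂ν) := by rw [hmeanX]
    _ ≤ ∫ t, f (x + s • t) ∂ν :=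
      hconv.map_integral_le hf.continuous.continuousOn isClosed_univ
        (ae_of_all _ fun _ => mem_univ _) ((integrable_const x).add hsmul)
        (hf.integrable_comp_add_smul hν x s)

theorem LipschitzWith.integral_comp_add_smul_le (hf : LipschitzWith K f)
    (hν : Integrable (fun t => t) ν) (x : E) (s : ℝ) :
    ∫ t, f (x + s • t) ∂ν ≤ f x + K * |s| * ∫ t, ‖t‖ ∂ν := by
  have hbound (t : E) : f (x + s • t) ≤ f x + K * |s| * ‖t‖ := by
    have := hf.dist_le_mul (x + s • t) x
    rw [Real.dist_eq, dist_eq_norm, add_sub_cancel_left, norm_smul, Real.norm_eq_abs] at this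
    linarith [le_abs_self (f (x + s • t) - f x)]
  have hnorm : Integrable (fun t => K * |s| * ‖t‖) ν := hν.norm.const_mul _
  calc ∫ t, f (x + s • t) ∂ν ≤ ∫ t, (f x + K * |s| * ‖t‖) ∂ν :=
        integral_mono (hf.integrable_comp_add_smul hν x s) ((integrable_const _).add hnorm) hbound
    _ = f x + K * |s| * ∫ t, ‖t‖ ∂ν := by
        rw [integral_add (integrable_const _) hnorm, integral_const, integral_const_mul]
        simp

end

theorem integral_abs_gaussianReal_le (v : ℝ≥0) : ∫ t, |t| ∂gaussianReal 0 v ≤ √v := by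
  have hsq : Integrable (fun t : ℝ => t ^ 2) (gaussianReal 0 v) :=
    (memLp_id_gaussianReal 2).integrable_sq
  have hsecond : ∫ t, t ^ 2 ∂gaussianReal 0 v = v := by
    rw [← variance_of_integral_eq_zero aemeasurable_id' integral_id_gaussianReal,
      variance_fun_id_gaussianReal]
  calc ∫ t, |t| ∂gaussianReal 0 v = ∫ t, √(t ^ 2) ∂gaussianReal 0 v := by
        simp_rw [Real.sqrt_sq_eq_abs]
    _ ≤ √(∫ t, t ^ 2 ∂gaussianReal 0 v) :=
        Real.strictConcaveOn_sqrt.concaveOn.le_map_integral Real.continuous_sqrt.continuousOn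
          isClosed_Ici (ae_of_all _ fun t => sq_nonneg t) hsq
          (by simpa [Function.comp_def, Real.sqrt_sq_eq_abs] using
            ((memLp_id_gaussianReal 1).integrable le_rfl).abs)
    _ = √v := by rw [hsecond]

theorem stmt_3 (f : ℝ → ℝ) (D₁ : ℝ)
    (hconv : ConvexOn ℝ Set.univ f)
    (hlip : ∀ x y : ℝ, |f x - f y| ≤ D₁ * |x - y|)
    (μ : ℝ) (hμ : 0 < μ)
    (fμ : ℝ → ℝ)
    (hfμ : ∀ x, fμ x = ∫ t, f (x + μ * t) ∂(gaussianReal 0 1)) :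
    ∀ x : ℝ, f x ≤ fμ x ∧ fμ x ≤ f x + μ * D₁ := by
  intro x
  have hD₁ : 0 ≤ D₁ := (abs_nonneg _).trans (by simpa using hlip 1 0)
  have hf : LipschitzWith D₁.toNNReal f := .of_dist_le_mul fun a b => by
    simpa [Real.dist_eq, hD₁] using hlip a b
  have hγ : Integrable (fun t : ℝ => t) (gaussianReal 0 1) :=
    (memLp_id_gaussianReal 1).integrable le_rfl
  rw [hfμ x]
  refine ⟨hconv.le_integral_comp_add_smul hf hγ integral_id_gaussianReal x μ, ?_⟩
  calc ∫ t, f (x + μ * t) ∂gaussianReal 0 1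
      ≤ f x + D₁ * μ * ∫ t, |t| ∂gaussianReal 0 1 := by
        simpa [hD₁, abs_of_pos hμ] using hf.integral_comp_add_smul_le hγ x μ
    _ ≤ f x + D₁ * μ * 1 := by
        gcongr
        simpa using integral_abs_gaussianReal_le 1
    _ = f x + μ * D₁ := by ring
end

section
/- Let f : ℝ → ℝ be convex and D₁-Lipschitz, μ > 0, and f_μ its Gaussian smoothing. Then f_μ is differentiable and its derivative f_μ'(x) is an ε-subgradient of f at x, with ε = μ·D₁; that is, for all z: f(z) ≥ f(x) − μ·D₁ + f_μ'(x)·(z − x). -/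
/-!
Jensen's inequality gives `f ≤ f_μ`, and the Lipschitz bound gives
`f_μ ≤ f + μ D₁ 𝔼|t| ≤ f + μ D₁` since `𝔼|t| ≤ (1 + 𝔼 t²) / 2 = 1` for a standard Gaussian.
The smoothing `f_μ` is convex, and differentiable by dominated differentiation (`f` is
differentiable almost everywhere by Rademacher and the Gaussian has a density), so it lies above
its tangent lines. Chaining: `f z + μ D₁ ≥ f_μ z ≥ f_μ x + f_μ'(x) (z - x) ≥ f x + f_μ'(x) (z - x)`.
-/

open MeasureTheory ProbabilityTheory Set
open scoped NNReal

theorem ConvexOn.add_mul_sub_le_of_hasDerivAt {S : Set ℝ} {f : ℝ → ℝ} {f' x z : ℝ}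
    (hf : ConvexOn ℝ S f) (hx : x ∈ S) (hz : z ∈ S) (hd : HasDerivAt f f' x) :
    f x + f' * (z - x) ≤ f z := by
  rcases lt_trichotomy x z with hxz | rfl | hzx
  · have := hf.le_slope_of_hasDerivAt hx hz hxz hd
    rw [slope_def_field, le_div_iff₀ (sub_pos.mpr hxz)] at this
    linarith
  · simp
  · have := hf.slope_le_of_hasDerivAt hz hx hzx hd
    rw [slope_def_field, div_le_iff₀ (sub_pos.mpr hzx)] at this
    linarith

section Smoothing

variable {α : Type*} [MeasurableSpace α] {ν : Measure α} {f : ℝ → ℝ} {g : α → ℝ} {K : ℝ≥0}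

theorem LipschitzWith.abs_sub_apply_add_le (hf : LipschitzWith K f) (x u : ℝ) :
    |f (x + u) - f x| ≤ K * |u| := by
  simpa [Real.dist_eq] using hf.dist_le_mul (x + u) x

theorem LipschitzWith.integrable_comp_add [IsFiniteMeasure ν] (hf : LipschitzWith K f)
    (hg : Integrable g ν) (x : ℝ) : Integrable (fun t => f (x + g t)) ν := by
  refine ((integrable_const |f x|).add (hg.norm.const_mul K)).mono'
    (hf.continuous.comp_aestronglyMeasurable (hg.aestronglyMeasurable.const_add x))
    (ae_of_all _ fun t => ?_)
  show |f (x + g t)| ≤ |f x| + K * |g t|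
  linarith [hf.abs_sub_apply_add_le x (g t), abs_sub_abs_le_abs_sub (f (x + g t)) (f x)]

theorem LipschitzWith.integral_comp_add_le [IsProbabilityMeasure ν] (hf : LipschitzWith K f)
    (hg : Integrable g ν) (x : ℝ) : ∫ t, f (x + g t) ∂ν ≤ f x + K * ∫ t, |g t| ∂ν := by
  have hbound : Integrable (fun t => f x + K * |g t|) ν :=
    (integrable_const _).add (hg.abs.const_mul _)
  calc ∫ t, f (x + g t) ∂ν ≤ ∫ t, (f x + K * |g t|) ∂ν := by
        refine integral_mono (hf.integrable_comp_add hg x) hbound fun t => ?_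
        linarith [hf.abs_sub_apply_add_le x (g t), le_abs_self (f (x + g t) - f x)]
    _ = f x + K * ∫ t, |g t| ∂ν := by
        rw [integral_add (integrable_const _) (hg.abs.const_mul _), integral_const_mul]
        simp

theorem ConvexOn.convexOn_integral_comp_add (hf : ConvexOn ℝ univ f)
    (hint : ∀ x, Integrable (fun t => f (x + g t)) ν) :
    ConvexOn ℝ univ fun x => ∫ t, f (x + g t) ∂ν := by
  refine ⟨convex_univ, fun a _ b _ p q hp hq hpq => ?_⟩
  have hpoint : ∀ t, f (p • a + q • b + g t) ≤ p * f (a + g t) + q * f (b + g t) := fun t => by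
    have h := hf.2 (mem_univ (a + g t)) (mem_univ (b + g t)) hp hq hpq
    have e : p * a + q * b + g t = p * (a + g t) + q * (b + g t) := by
      linear_combination (g t) * hpq.symm
    simpa only [smul_eq_mul, e] using h
  calc ∫ t, f (p • a + q • b + g t) ∂ν ≤ ∫ t, (p * f (a + g t) + q * f (b + g t)) ∂ν :=
        integral_mono (hint _) (((hint a).const_mul p).add ((hint b).const_mul q)) hpoint
    _ = p • ∫ t, f (a + g t) ∂ν + q • ∫ t, f (b + g t) ∂ν := by
        rw [integral_add ((hint a).const_mul p) ((hint b).const_mul q),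
          integral_const_mul, integral_const_mul, smul_eq_mul, smul_eq_mul]

theorem ConvexOn.le_integral_comp_add [IsProbabilityMeasure ν] (hf : ConvexOn ℝ univ f)
    (hfc : Continuous f) (hg : Integrable g ν) (hg₀ : ∫ t, g t ∂ν = 0) {x : ℝ}
    (hint : Integrable (fun t => f (x + g t)) ν) : f x ≤ ∫ t, f (x + g t) ∂ν := by
  have hmean : ∫ t, (x + g t) ∂ν = x := by
    rw [integral_add (integrable_const x) hg, hg₀]
    simp
  simpa only [hmean] using hf.map_integral_le (f := fun t => x + g t) hfc.continuousOn
    isClosed_univ (ae_of_all _ fun _ => mem_univ _) ((integrable_const x).add hg) hint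

end Smoothing

theorem LipschitzWith.hasDerivAt_integral_comp_add_mul {ν : Measure ℝ} [IsFiniteMeasure ν]
    {f : ℝ → ℝ} {K : ℝ≥0} {c x : ℝ} (hf : LipschitzWith K f) (hν : ν ≪ volume) (hc : c ≠ 0)
    (hint : Integrable (fun t => f (x + c * t)) ν) :
    HasDerivAt (fun y => ∫ t, f (y + c * t) ∂ν) (∫ t, deriv f (x + c * t) ∂ν) x := by
  have hshift : Measure.QuasiMeasurePreserving (fun t : ℝ => x + c * t) volume volume :=
    (measurePreserving_add_left volume x).quasiMeasurePreserving.comp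
      ⟨measurable_const_mul c, by
        rw [Real.map_volume_mul_left hc]; exact Measure.smul_absolutelyContinuous⟩
  have hdiff : ∀ᵐ t ∂ν, DifferentiableAt ℝ f (x + c * t) :=
    hν.ae_le (hshift.ae hf.ae_differentiableAt)
  have hmeas : ∀ y, AEStronglyMeasurable (fun t => f (y + c * t)) ν := fun y =>
    (hf.continuous.comp (continuous_const.add (continuous_const_mul c))).aestronglyMeasurable
  refine (hasDerivAt_integral_of_dominated_loc_of_lip (bound := fun _ => (K : ℝ))
    (s := univ) Filter.univ_mem (.of_forall hmeas) hint
    ((measurable_deriv f).comp (measurable_const.add (measurable_const_mul c))).aestronglyMeasurable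
    (ae_of_all _ fun t => ?_) (integrable_const _) (hdiff.mono fun t ht => ?_)).2
  · refine LipschitzOnWith.of_dist_le_mul fun a _ b _ => ?_
    simpa [Real.dist_eq] using hf.dist_le_mul (a + c * t) (b + c * t)
  · exact ht.hasDerivAt.comp_add_const x (c * t)

theorem integral_abs_gaussianReal_le_one : ∫ t, |t| ∂gaussianReal 0 1 ≤ 1 := by
  have hsq : ∫ t, t ^ 2 ∂gaussianReal 0 1 = 1 := by
    simpa [variance_eq_integral measurable_id.aemeasurable, integral_id_gaussianReal]
      using variance_id_gaussianReal (μ := 0) (v := 1)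
  have hint : Integrable (fun t : ℝ => t ^ 2) (gaussianReal 0 1) :=
    (memLp_id_gaussianReal 2).integrable_sq
  calc ∫ t, |t| ∂gaussianReal 0 1 ≤ ∫ t, (1 + t ^ 2) / 2 ∂gaussianReal 0 1 := by
        refine integral_mono ((memLp_id_gaussianReal 1).integrable le_rfl).abs
          (((integrable_const 1).add hint).div_const 2) fun t => ?_
        nlinarith [sq_abs t, sq_nonneg (|t| - 1)]
    _ = 1 := by
        rw [integral_div, integral_add (integrable_const 1) hint, hsq]
        simp

theorem stmt_6 (f : ℝ → ℝ) (D₁ : ℝ)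
    (hconv : ConvexOn ℝ Set.univ f)
    (hlip : ∀ x y : ℝ, |f x - f y| ≤ D₁ * |x - y|)
    (μ : ℝ) (hμ : 0 < μ)
    (fμ : ℝ → ℝ)
    (hfμ : ∀ x, fμ x = ∫ t, f (x + μ * t) ∂(gaussianReal 0 1)) :
    Differentiable ℝ fμ ∧
      ∀ x z : ℝ, f z ≥ f x - μ * D₁ + deriv fμ x * (z - x) := by
  have hD : 0 ≤ D₁ := (abs_nonneg _).trans (by simpa using hlip 1 0)
  have hf : LipschitzWith D₁.toNNReal f := .of_dist_le_mul fun x y => by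
    simpa [Real.dist_eq, hD] using hlip x y
  have hg : Integrable (fun t => μ * t) (gaussianReal 0 1) :=
    ((memLp_id_gaussianReal 1).integrable le_rfl).const_mul μ
  have hint := hf.integrable_comp_add hg
  have hfμ_eq : fμ = fun x => ∫ t, f (x + μ * t) ∂(gaussianReal 0 1) := funext hfμ
  have hderiv (x : ℝ) : HasDerivAt fμ (∫ t, deriv f (x + μ * t) ∂(gaussianReal 0 1)) x :=
    hfμ_eq ▸ hf.hasDerivAt_integral_comp_add_mul
      (gaussianReal_absolutelyContinuous 0 one_ne_zero) hμ.ne' (hint x)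
  have hconvμ : ConvexOn ℝ univ fμ := hfμ_eq ▸ hconv.convexOn_integral_comp_add hint
  have hmean : ∫ t, μ * t ∂(gaussianReal 0 1) = 0 := by
    rw [integral_const_mul, integral_id_gaussianReal, mul_zero]
  refine ⟨fun x => (hderiv x).differentiableAt, fun x z => ?_⟩
  have hlower : f x ≤ fμ x := hfμ x ▸ hconv.le_integral_comp_add hf.continuous hg hmean (hint x)
  have hupper : fμ z ≤ f z + μ * D₁ := calc
    fμ z ≤ f z + D₁ * ∫ t, |μ * t| ∂(gaussianReal 0 1) := by
      simpa only [hfμ, Real.coe_toNNReal _ hD] using hf.integral_comp_add_le hg z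
    _ = f z + μ * D₁ * ∫ t, |t| ∂(gaussianReal 0 1) := by
      simp only [abs_mul, abs_of_pos hμ, integral_const_mul]
      ring
    _ ≤ f z + μ * D₁ := by
      nlinarith [integral_abs_gaussianReal_le_one, mul_nonneg hμ.le hD]
  have htangent := hconvμ.add_mul_sub_le_of_hasDerivAt (mem_univ x) (mem_univ z) (hderiv x)
  rw [(hderiv x).deriv]
  linarith
end

section
/- Let (v_k) be a nonnegative sequence, χ > 0, α ∈ ℝ with 0 < c := 2χα − Lα² < 1 for some L ≥ 0, and suppose v_{k+1} ≤ (1 + η_k − 2χα)·v_k + w_k where η_k ≤ L·α² + a·γ^k with γ ∈ (0,1), a ≥ 0, and w_k ≤ W·α² + b·γ^k with b ≥ 0. Then limsup_{k→∞} v_k ≤ (W·α²)/(2χα − L·α²) = W·α/(2χ − L·α). -/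
open Filter Topology

/-!
Since `γ ^ k → 0`, for every `δ > 0` the recursion is eventually dominated by the
contraction `v (k + 1) ≤ (1 - c + δ) v k + (W α² + δ)` with `c = 2χα - Lα²`, whose iterates
approach its fixed point `(W α² + δ) / (c - δ)` geometrically. Letting `δ → 0` gives
`limsup v ≤ W α² / c`.
-/

section LinearRecursion

variable {v : ℕ → ℝ} {r s : ℝ}

theorem sub_le_pow_mul_of_le_mul_add {K : ℕ} (hr0 : 0 ≤ r) (hr1 : r < 1)
    (hstep : ∀ k ≥ K, v (k + 1) ≤ r * v k + s) (n : ℕ) :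
    v (n + K) - s / (1 - r) ≤ r ^ n * (v K - s / (1 - r)) := by
  have hfix : r * (s / (1 - r)) + s = s / (1 - r) := by
    field_simp [(sub_pos.mpr hr1).ne']
    ring
  induction n with
  | zero => simp
  | succ n ih =>
    calc v (n + 1 + K) - s / (1 - r) ≤ r * (v (n + K) - s / (1 - r)) := by
          rw [Nat.add_right_comm]
          linarith [hstep (n + K) (Nat.le_add_left K n)]
      _ ≤ r * (r ^ n * (v K - s / (1 - r))) := mul_le_mul_of_nonneg_left ih hr0
      _ = r ^ (n + 1) * (v K - s / (1 - r)) := by ring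

theorem limsup_le_div_of_eventually_le_mul_add (hv : BddBelow (Set.range v))
    (hr0 : 0 ≤ r) (hr1 : r < 1) (hstep : ∀ᶠ k in atTop, v (k + 1) ≤ r * v k + s) :
    limsup v atTop ≤ s / (1 - r) := by
  obtain ⟨K, hK⟩ := eventually_atTop.mp hstep
  obtain ⟨m, hm⟩ := hv
  set p := s / (1 - r)
  have hlim : Tendsto (fun n ↦ p + r ^ n * (v K - p)) atTop (𝓝 p) := by
    simpa using (tendsto_pow_atTop_nhds_zero_of_lt_one hr0 hr1).mul_const (v K - p)
      |>.const_add p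
  rw [← limsup_nat_add v K, ← hlim.limsup_eq]
  refine limsup_le_limsup (Eventually.of_forall fun n ↦ ?_)
    (isCoboundedUnder_le_of_le atTop fun n ↦ hm ⟨n + K, rfl⟩) hlim.isBoundedUnder_le
  linarith [sub_le_pow_mul_of_le_mul_add hr0 hr1 hK n]

theorem limsup_le_div_of_le_mul_add {ρ σ : ℝ} {r s ε ε' : ℕ → ℝ} (hv : ∀ k, 0 ≤ v k)
    (hρ0 : 0 ≤ ρ) (hρ1 : ρ < 1) (hr : ∀ k, r k ≤ ρ + ε k) (hs : ∀ k, s k ≤ σ + ε' k)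
    (hε : Tendsto ε atTop (𝓝 0)) (hε' : Tendsto ε' atTop (𝓝 0))
    (hrec : ∀ k, v (k + 1) ≤ r k * v k + s k) :
    limsup v atTop ≤ σ / (1 - ρ) := by
  have hδ : ∀ δ ∈ Set.Ioo 0 (1 - ρ), limsup v atTop ≤ (σ + δ) / (1 - (ρ + δ)) := by
    rintro δ ⟨hδ0, hδ1⟩
    refine limsup_le_div_of_eventually_le_mul_add ⟨0, Set.forall_mem_range.mpr hv⟩
      (by linarith) (by linarith) ?_
    filter_upwards [hε.eventually (eventually_le_nhds hδ0),
      hε'.eventually (eventually_le_nhds hδ0)] with k hεk hεk'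
    calc v (k + 1) ≤ r k * v k + s k := hrec k
      _ ≤ (ρ + δ) * v k + (σ + δ) := by
        gcongr
        · exact hv k
        · linarith [hr k]
        · linarith [hs k]
  have hlim : Tendsto (fun δ ↦ (σ + δ) / (1 - (ρ + δ))) (𝓝[>] 0) (𝓝 (σ / (1 - ρ))) := by
    have : ContinuousAt (fun δ ↦ (σ + δ) / (1 - (ρ + δ))) 0 :=
      (continuousAt_const.add continuousAt_id).div
        (continuousAt_const.sub (continuousAt_const.add continuousAt_id))
        (by rw [add_zero, sub_ne_zero]; exact hρ1.ne')
    simpa using this.tendsto.mono_left nhdsWithin_le_nhds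
  exact ge_of_tendsto hlim (mem_of_superset (Ioo_mem_nhdsGT (by linarith)) hδ)

end LinearRecursion

theorem stmt_13_general (v η w : ℕ → ℝ) (χ α L W a b γ : ℝ)
    (hv : ∀ k, 0 ≤ v k)
    (hγ : γ ∈ Set.Ioo (0:ℝ) 1)
    (hc : 0 < 2 * χ * α - L * α ^ 2) (hc1 : 2 * χ * α - L * α ^ 2 < 1)
    (hηk : ∀ k, η k ≤ L * α ^ 2 + a * γ ^ k)
    (hwk : ∀ k, w k ≤ W * α ^ 2 + b * γ ^ k)
    (hrec : ∀ k, v (k + 1) ≤ (1 + η k - 2 * χ * α) * v k + w k) :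
    limsup v atTop ≤ W * α / (2 * χ - L * α) := by
  have hpow := tendsto_pow_atTop_nhds_zero_of_lt_one hγ.1.le hγ.2
  have hbound := limsup_le_div_of_le_mul_add (ρ := 1 - (2 * χ * α - L * α ^ 2)) (σ := W * α ^ 2)
    (ε := fun k ↦ a * γ ^ k) hv (by linarith) (by linarith) (fun k ↦ by linarith [hηk k]) hwk
    (by simpa using hpow.const_mul a) (by simpa using hpow.const_mul b) hrec
  have hfactor : 2 * χ * α - L * α ^ 2 = α * (2 * χ - L * α) := by ring
  rw [sub_sub_cancel, hfactor] at hbound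
  obtain ⟨hα, hκ⟩ := mul_ne_zero_iff.mp (hfactor ▸ hc.ne')
  calc limsup v atTop ≤ W * α ^ 2 / (α * (2 * χ - L * α)) := hbound
    _ = W * α / (2 * χ - L * α) := by field_simp

theorem stmt_13 (v η w : ℕ → ℝ) (χ α L W a b γ : ℝ)
    (hv : ∀ k, 0 ≤ v k) (hη : ∀ k, 0 ≤ η k) (hw : ∀ k, 0 ≤ w k)
    (hχ : 0 < χ) (hL : 0 ≤ L) (hW : 0 ≤ W) (ha : 0 ≤ a) (hb : 0 ≤ b)
    (hγ : γ ∈ Set.Ioo (0:ℝ) 1)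
    (hc : 0 < 2 * χ * α - L * α ^ 2) (hc1 : 2 * χ * α - L * α ^ 2 < 1)
    (hηk : ∀ k, η k ≤ L * α ^ 2 + a * γ ^ k)
    (hwk : ∀ k, w k ≤ W * α ^ 2 + b * γ ^ k)
    (hrec : ∀ k, v (k + 1) ≤ (1 + η k - 2 * χ * α) * v k + w k) :
    limsup v atTop ≤ W * α / (2 * χ - L * α) :=
  stmt_13_general v η w χ α L W a b γ hv hγ hc hc1 hηk hwk hrec
end
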